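/- Every subgroup G ≤ Sym_n has a unique coarsest supporting partition SP(G); that is, there is a supporting partition SP(G) of G such that every supporting partition of G is refined by SP(G) (every part of any supporting partition of G is contained in some part of SP(G)), and SP(G) is the unique supporting partition with this property. -/

import Mathlib

/-! The transpositions of `G` define an equivalence relation `a ∼ b :⇔ (a b) ∈ G`. The pointwise
stabiliser of a partition is generated by the transpositions inside its parts, so a partition
supports `G` exactly when it refines `∼`; hence `∼` is the coarsest supporting partition. -/

/-- Binary strings of length `n`: the set `{0,1}ⁿ`. -/
abbrev Str (n : ℕ) := Fin n → Bool

/-- The action of `Sym_n` on strings, permuting positions: `(π·v)_i = v_{π⁻¹(i)}`. -/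
def act {n : ℕ} (π : Equiv.Perm (Fin n)) (v : Str n) : Str n := fun i => v (π.symm i)

/-- The action of `Sym_n` on sets of strings. -/
def actSet {n : ℕ} (π : Equiv.Perm (Fin n)) (C : Set (Str n)) : Set (Str n) := act π '' C

/-- The (setwise) stabiliser of a set of strings. -/
def setStab {n : ℕ} (C : Set (Str n)) : Set (Equiv.Perm (Fin n)) := {π | actSet π C = C}

/-- The orbit of a set of strings under `Sym_n`. -/
def setOrbit {n : ℕ} (C : Set (Str n)) : Set (Set (Str n)) := {D | ∃ π, D = actSet π C}

/-- An ordered partition of `{0,1}ⁿ`: a tuple of pairwise disjoint nonempty subsets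
whose union is everything. -/
def IsOrderedPartition {n m : ℕ} (C : Fin m → Set (Str n)) : Prop :=
  (∀ i, (C i).Nonempty) ∧ (Pairwise fun i j => Disjoint (C i) (C j)) ∧ (⋃ i, C i) = Set.univ

/-- The stabiliser of an ordered partition (componentwise). -/
def tupStab {n m : ℕ} (C : Fin m → Set (Str n)) : Set (Equiv.Perm (Fin n)) :=
  {π | ∀ i, actSet π (C i) = C i}

/-- The orbit of an ordered partition under the componentwise action of `Sym_n`. -/
def tupOrbit {n m : ℕ} (C : Fin m → Set (Str n)) : Set (Fin m → Set (Str n)) :=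
  {D | ∃ π, D = fun i => actSet π (C i)}

/-- Pointwise stabiliser of a partition (setoid) of `[n]`: permutations fixing
each part setwise. -/
def ptStab {n : ℕ} (s : Setoid (Fin n)) : Set (Equiv.Perm (Fin n)) :=
  {π | ∀ P ∈ s.classes, (π : Fin n → Fin n) '' P = P}

/-- Setwise stabiliser of a partition of `[n]`: permutations mapping parts to parts. -/
def swStab {n : ℕ} (s : Setoid (Fin n)) : Set (Equiv.Perm (Fin n)) :=
  {π | ∀ P ∈ s.classes, (π : Fin n → Fin n) '' P ∈ s.classes}

/-- A partition `s` of `[n]` is a supporting partition of `G` if its pointwise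
stabiliser is contained in `G`. -/
def IsSupporting {n : ℕ} (G : Set (Equiv.Perm (Fin n))) (s : Setoid (Fin n)) : Prop :=
  ∀ π ∈ ptStab s, π ∈ G

/-- `s` is as coarse as `t`: every part of `t` is contained in some part of `s`. -/
def AsCoarseAs {X : Type*} (s t : Setoid X) : Prop :=
  ∀ P ∈ t.classes, ∃ Q ∈ s.classes, P ⊆ Q

/-- `s` is the coarsest supporting partition of `G`. -/
def IsCoarsestSupp {n : ℕ} (G : Set (Equiv.Perm (Fin n))) (s : Setoid (Fin n)) : Prop :=
  IsSupporting G s ∧ ∀ t, IsSupporting G t → AsCoarseAs s t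

/-- The intersection `⊓_{a ∈ A} f(a)` of a family of partitions: parts are the
nonempty intersections of parts. -/
def interSetoid {X ι : Type*} (A : Set ι) (f : ι → Setoid X) : Setoid X where
  r x y := ∀ a ∈ A, (f a).r x y
  iseqv := ⟨fun x a _ => (f a).refl x,
            fun h a ha => (f a).symm (h a ha),
            fun h h' a ha => (f a).trans (h a ha) (h' a ha)⟩

/-- `SP(a)` for a string `a`: the partition of positions according to the bit of `a`. -/
def strSetoid {n : ℕ} (a : Str n) : Setoid (Fin n) where
  r k j := a k = a j
  iseqv := ⟨fun _ => rfl, Eq.symm, Eq.trans⟩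

/-- `π ∈ Sym_n` realises a permutation `σ` of the parts of a partition `s` if
`π(P) = σ(P)` for every part `P`. -/
def Realises {n : ℕ} (π : Equiv.Perm (Fin n)) {s : Setoid (Fin n)}
    (σ : Equiv.Perm s.classes) : Prop :=
  ∀ P : s.classes, (π : Fin n → Fin n) '' (P : Set (Fin n)) = ((σ P : Set (Fin n)))

open Equiv

section SwapSetoid

variable {α : Type*} [DecidableEq α]

def swapSetoid (G : Subgroup (Perm α)) : Setoid α where
  r a b := swap a b ∈ G
  iseqv :=
    ⟨fun a => by rw [swap_self]; exact G.one_mem,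
     fun h => by rwa [swap_comm],
     fun hab hbc => SubmonoidClass.swap_mem_trans G hab hbc⟩

theorem Subgroup.mem_of_forall_swap_apply_mem [Finite α] {G : Subgroup (Perm α)} {π : Perm α}
    (h : ∀ x, swap (π x) x ∈ G) : π ∈ G := by
  set S : Set (Perm α) := {σ | σ ∈ G ∧ σ.IsSwap}
  have hS : ∀ σ ∈ S, σ.IsSwap := fun σ hσ => hσ.2
  have swap_mem_closure : ∀ x, swap (π x) x ∈ Subgroup.closure S := by
    intro x
    by_cases hx : π x = x
    · rw [hx, swap_self]
      exact one_mem _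
    · exact Subgroup.subset_closure ⟨h x, π x, x, hx, rfl⟩
  have hπ : π ∈ Subgroup.closure S :=
    (mem_closure_isSwap hS).2
      ⟨Set.toFinite _, fun x => (swap_mem_closure_isSwap hS).1 (swap_mem_closure x)⟩
  exact (Subgroup.closure_le G).2 (fun σ hσ => hσ.1) hπ

end SwapSetoid

theorem asCoarseAs_iff_le {X : Type*} {s t : Setoid X} : AsCoarseAs s t ↔ t ≤ s := by
  constructor
  · intro h x y hxy
    obtain ⟨_, ⟨w, rfl⟩, hsub⟩ := h _ (t.mem_classes y)
    exact s.trans' (hsub hxy) (s.symm' (hsub (t.refl' y)))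
  · rintro h _ ⟨y, rfl⟩
    exact ⟨{x | s x y}, s.mem_classes y, fun x hx => h hx⟩

theorem mem_ptStab_iff {n : ℕ} {s : Setoid (Fin n)} {π : Perm (Fin n)} :
    π ∈ ptStab s ↔ ∀ x, s (π x) x := by
  constructor
  · intro h x
    have hclass := h _ (s.mem_classes x)
    exact hclass.subset ⟨x, s.refl' x, rfl⟩
  · rintro h _ ⟨y, rfl⟩
    refine Set.eq_of_subset_of_subset ?_ fun z hz => ⟨π.symm z, ?_, π.apply_symm_apply z⟩
    · rintro _ ⟨x, hx, rfl⟩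
      exact s.trans' (h x) hx
    · have := h (π.symm z)
      rw [π.apply_symm_apply] at this
      exact s.trans' (s.symm' this) hz

theorem swap_mem_ptStab {n : ℕ} {s : Setoid (Fin n)} {a b : Fin n} (h : s a b) :
    swap a b ∈ ptStab s := by
  refine mem_ptStab_iff.2 fun x => ?_
  rcases eq_or_ne x a with rfl | hxa
  · simpa only [swap_apply_left] using s.symm' h
  rcases eq_or_ne x b with rfl | hxb
  · simpa only [swap_apply_right] using h
  · rw [swap_apply_of_ne_of_ne hxa hxb]

theorem isSupporting_iff_le_swapSetoid {n : ℕ} {G : Subgroup (Perm (Fin n))}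
    {s : Setoid (Fin n)} : IsSupporting (G : Set (Perm (Fin n))) s ↔ s ≤ swapSetoid G := by
  constructor
  · exact fun h a b hab => h _ (swap_mem_ptStab hab)
  · intro h π hπ
    exact G.mem_of_forall_swap_apply_mem fun x => h (mem_ptStab_iff.1 hπ x)

theorem isCoarsestSupp_iff {n : ℕ} {G : Subgroup (Perm (Fin n))} {s : Setoid (Fin n)} :
    IsCoarsestSupp (G : Set (Perm (Fin n))) s ↔ s = swapSetoid G := by
  simp only [IsCoarsestSupp, isSupporting_iff_le_swapSetoid, asCoarseAs_iff_le]
  constructor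
  · exact fun ⟨hle, hge⟩ => le_antisymm hle (hge _ le_rfl)
  · rintro rfl
    exact ⟨le_rfl, fun _ => id⟩

/-- every subgroup `G ≤ Sym_n` has a unique coarsest supporting
partition. -/
theorem stmt_4 {n : ℕ} (G : Subgroup (Equiv.Perm (Fin n))) :
    ∃! s : Setoid (Fin n), IsCoarsestSupp (G : Set (Equiv.Perm (Fin n))) s :=
  ⟨swapSetoid G, isCoarsestSupp_iff.2 rfl, fun _ hs => isCoarsestSupp_iff.1 hs⟩
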